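/- arXiv:1907.01964 — 2 statements merged into one kernel-verified Lean document; each statement's English description precedes it below -/
import Mathlib

section
/- Let u, v : ℝ³ → ℝ and K : ℝ³ → Matrix n n ℝ be smooth functions of (x, y, t), and set A = K_x, B = K_y. Then (A, B) satisfies the matrix extension of the Manakov–Santini system, ∂_y A − ∂_x B = 0 and (∂_y + v_x ∂_x)B − (∂_t + (v_y − u)∂_x)A + u_x A + [A, B] = 0, if and only if K satisfies the potential equation K_{tx} − K_{yy} − [K_x, K_y] − ∂_x(u K_x) + v_y K_{xx} − v_x K_{xy} = 0. -/
/-- Partial derivative in the `i`-th coordinate direction on `ℝᵏ`. -/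
noncomputable def pd {k : ℕ} (i : Fin k) (f : (Fin k → ℝ) → ℝ) (p : Fin k → ℝ) : ℝ :=
  fderiv ℝ f p (Pi.single i 1)

/-- Entrywise partial derivative of a matrix-valued function. -/
noncomputable def pdM {k N : ℕ} (i : Fin k)
    (A : (Fin k → ℝ) → Matrix (Fin N) (Fin N) ℝ) (p : Fin k → ℝ) :
    Matrix (Fin N) (Fin N) ℝ :=
  Matrix.of fun a b => pd i (fun q => A q a b) p

lemma pd_contDiff {k : ℕ} (i : Fin k) {f : (Fin k → ℝ) → ℝ} (hf : ContDiff ℝ (⊤ : ℕ∞) f) :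
    ContDiff ℝ (⊤ : ℕ∞) (pd i f) := by
  have h1 : ContDiff ℝ (⊤ : ℕ∞) (fderiv ℝ f) := hf.fderiv_right (by simp)
  exact (ContinuousLinearMap.apply ℝ ℝ (Pi.single i 1)).contDiff.comp h1

lemma pd_swap {k : ℕ} (i j : Fin k) {f : (Fin k → ℝ) → ℝ} (hf : ContDiff ℝ (⊤ : ℕ∞) f)
    (p : Fin k → ℝ) : pd i (pd j f) p = pd j (pd i f) p := by
  have hd : ∀ y, HasFDerivAt f (fderiv ℝ f y) y := fun y =>
    (hf.differentiable (by simp) y).hasFDerivAt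
  have h1 : ContDiff ℝ (⊤ : ℕ∞) (fderiv ℝ f) := hf.fderiv_right (by simp)
  have h2 : HasFDerivAt (fderiv ℝ f) (fderiv ℝ (fderiv ℝ f) p) p :=
    (h1.differentiable (by simp) p).hasFDerivAt
  have key : ∀ (a : Fin k) (w : Fin k → ℝ), pd a (fun q => fderiv ℝ f q w) p
      = fderiv ℝ (fderiv ℝ f) p (Pi.single a 1) w := by
    intro a w
    have := fderiv_clm_apply (c := fderiv ℝ f) (u := fun _ => w)
      (h1.differentiable (by simp) p) (differentiableAt_const w)
    simp only [pd, this]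
    simp
  have sym := second_derivative_symmetric hd h2 (Pi.single i 1) (Pi.single j 1)
  simp only [pd]
  calc fderiv ℝ (fun q => fderiv ℝ f q (Pi.single j 1)) p (Pi.single i 1)
      = fderiv ℝ (fderiv ℝ f) p (Pi.single i 1) (Pi.single j 1) := key i _
    _ = fderiv ℝ (fderiv ℝ f) p (Pi.single j 1) (Pi.single i 1) := sym
    _ = fderiv ℝ (fun q => fderiv ℝ f q (Pi.single i 1)) p (Pi.single j 1) := (key j _).symm

lemma pd_mul {k : ℕ} (i : Fin k) {c d : (Fin k → ℝ) → ℝ} (p : Fin k → ℝ)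
    (hc : DifferentiableAt ℝ c p) (hd : DifferentiableAt ℝ d p) :
    pd i (fun q => c q * d q) p = pd i c p * d p + c p * pd i d p := by
  simp only [pd, fderiv_fun_mul hc hd, ContinuousLinearMap.add_apply,
    ContinuousLinearMap.smul_apply, smul_eq_mul]
  ring

/-- Coordinates on `ℝ³`: `x = 0`, `y = 1`, `t = 2`.
With `A = K_x`, `B = K_y`, the pair `(A,B)` satisfies the matrix extension of the
Manakov–Santini system iff `K` satisfies the potential equation
`K_{tx} − K_{yy} − [K_x,K_y] − ∂_x(uK_x) + v_y K_{xx} − v_x K_{xy} = 0`. -/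
theorem stmt4 {N : ℕ} (u v : (Fin 3 → ℝ) → ℝ)
    (hu : ContDiff ℝ (⊤ : ℕ∞) u) (hv : ContDiff ℝ (⊤ : ℕ∞) v)
    (K : (Fin 3 → ℝ) → Matrix (Fin N) (Fin N) ℝ)
    (hK : ∀ a b, ContDiff ℝ (⊤ : ℕ∞) (fun q => K q a b))
    (A B : (Fin 3 → ℝ) → Matrix (Fin N) (Fin N) ℝ)
    (hA : A = pdM 0 K) (hB : B = pdM 1 K) :
    (∀ q : Fin 3 → ℝ,
      pdM 1 A q - pdM 0 B q = 0 ∧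
      (pdM 1 B q + pd 0 v q • pdM 0 B q)
        - (pdM 2 A q + (pd 1 v q - u q) • pdM 0 A q)
        + pd 0 u q • A q + (A q * B q - B q * A q) = 0) ↔
    (∀ q : Fin 3 → ℝ,
      pdM 2 (pdM 0 K) q - pdM 1 (pdM 1 K) q
        - (pdM 0 K q * pdM 1 K q - pdM 1 K q * pdM 0 K q)
        - pdM 0 (fun r => u r • pdM 0 K r) q
        + pd 1 v q • pdM 0 (pdM 0 K) q - pd 0 v q • pdM 1 (pdM 0 K) q = 0) := by
  subst hA hB
  have hKx : ∀ a b, ContDiff ℝ (⊤ : ℕ∞) (fun q => pdM 0 K q a b) := fun a b =>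
    pd_contDiff 0 (hK a b)
  have hswap : ∀ q, pdM 0 (pdM 1 K) q = pdM 1 (pdM 0 K) q := by
    intro q; ext a b
    exact pd_swap 0 1 (hK a b) q
  have hprod : ∀ q, pdM 0 (fun r => u r • pdM 0 K r) q
      = pd 0 u q • pdM 0 K q + u q • pdM 0 (pdM 0 K) q := by
    intro q; ext a b
    simp only [pdM, Matrix.of_apply, Matrix.add_apply, Matrix.smul_apply, smul_eq_mul]
    exact pd_mul 0 q (hu.differentiable (by simp) q) ((hKx a b).differentiable (by simp) q)
  have key : ∀ q, (pdM 1 (pdM 1 K) q + pd 0 v q • pdM 0 (pdM 1 K) q)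
        - (pdM 2 (pdM 0 K) q + (pd 1 v q - u q) • pdM 0 (pdM 0 K) q)
        + pd 0 u q • pdM 0 K q + (pdM 0 K q * pdM 1 K q - pdM 1 K q * pdM 0 K q)
      = -(pdM 2 (pdM 0 K) q - pdM 1 (pdM 1 K) q
        - (pdM 0 K q * pdM 1 K q - pdM 1 K q * pdM 0 K q)
        - pdM 0 (fun r => u r • pdM 0 K r) q
        + pd 1 v q • pdM 0 (pdM 0 K) q - pd 0 v q • pdM 1 (pdM 0 K) q) := by
    intro q
    rw [hswap, hprod]
    module
  constructor
  · intro h q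
    have h2 := (h q).2
    rw [key q] at h2
    exact neg_eq_zero.mp h2
  · intro h q
    refine ⟨?_, ?_⟩
    · ext a b
      simp only [pdM, Matrix.of_apply, Matrix.sub_apply, Matrix.zero_apply]
      exact sub_eq_zero.mpr (pd_swap 1 0 (hK a b) q)
    · rw [key q, h q, neg_zero]
end

section
/- Let φ, m : ℝ³ → ℝ be smooth functions of (x, y, t) with m_t nowhere zero, let K : ℝ³ → Matrix n n ℝ be smooth, and set A = K_t, B = −K_y. Then (A, B) satisfies the system ∂_t B + ∂_y A = 0 and (∂_x − (m_x/m_t)∂_t)B + (e^{−φ}/m_t)∂_t A − (φ_t (m_x/m_t) − φ_x)B + [A, B] = 0 if and only if K satisfies the potential equation e^{−φ} K_{tt} + m_x K_{yt} − m_t K_{xy} + (φ_t m_x − φ_x m_t) K_y + m_t [K_y, K_t] = 0. -/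

lemma pd_comm {k : ℕ} (i j : Fin k) (f : (Fin k → ℝ) → ℝ) (hf : ContDiff ℝ (⊤ : ℕ∞) f)
    (p : Fin k → ℝ) : pd i (pd j f) p = pd j (pd i f) p := by
  have hdf : ∀ y, HasFDerivAt f (fderiv ℝ f y) y := fun y =>
    (hf.differentiable (by simp) y).hasFDerivAt
  have hd2 : HasFDerivAt (fderiv ℝ f) (fderiv ℝ (fderiv ℝ f) p) p :=
    (((hf.fderiv_right (m := (⊤ : ℕ∞)) (by simp)).differentiable (by simp)) p).hasFDerivAt
  have key : ∀ v w : Fin k → ℝ, fderiv ℝ (fun q => fderiv ℝ f q w) p v =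
      fderiv ℝ (fderiv ℝ f) p v w := by
    intro v w
    have h : HasFDerivAt (fun q => fderiv ℝ f q w)
        ((ContinuousLinearMap.apply ℝ ℝ w).comp (fderiv ℝ (fderiv ℝ f) p)) p :=
      (ContinuousLinearMap.apply ℝ ℝ w).hasFDerivAt.comp p hd2
    rw [h.fderiv]; rfl
  have symm := second_derivative_symmetric hdf hd2 (Pi.single i 1) (Pi.single j 1)
  show fderiv ℝ (fun q => fderiv ℝ f q (Pi.single j 1)) p (Pi.single i 1) =
    fderiv ℝ (fun q => fderiv ℝ f q (Pi.single i 1)) p (Pi.single j 1)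
  rw [key, key, symm]

lemma pdM_comm {k N : ℕ} (i j : Fin k) (F : (Fin k → ℝ) → Matrix (Fin N) (Fin N) ℝ)
    (hF : ∀ a b, ContDiff ℝ (⊤ : ℕ∞) fun q => F q a b) (q : Fin k → ℝ) :
    pdM i (pdM j F) q = pdM j (pdM i F) q := by
  ext a b
  simp only [pdM, Matrix.of_apply]
  exact pd_comm i j _ (hF a b) q

lemma pdM_neg {k N : ℕ} (i : Fin k) (F : (Fin k → ℝ) → Matrix (Fin N) (Fin N) ℝ)
    (q : Fin k → ℝ) : pdM i (fun p => -(F p)) q = -(pdM i F q) := by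
  ext a b
  simp only [pdM, Matrix.of_apply, Matrix.neg_apply, pd, fderiv_fun_neg,
    ContinuousLinearMap.neg_apply]

/-- Coordinates on `ℝ³`: `x = 0`, `y = 1`, `t = 2`.  With `A = K_t`, `B = −K_y`,
the pair `(A,B)` satisfies the matrix extension of the generalized dispersionless
2D Toda system iff `K` satisfies the potential equation
`e^{−φ}K_{tt} + m_x K_{yt} − m_t K_{xy} + (φ_t m_x − φ_x m_t)K_y + m_t[K_y,K_t] = 0`. -/
theorem stmt9 {N : ℕ} (φ m : (Fin 3 → ℝ) → ℝ)
    (hφ : ContDiff ℝ (⊤ : ℕ∞) φ) (hm : ContDiff ℝ (⊤ : ℕ∞) m)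
    (hmt : ∀ q : Fin 3 → ℝ, pd 2 m q ≠ 0)
    (K : (Fin 3 → ℝ) → Matrix (Fin N) (Fin N) ℝ)
    (hK : ∀ a b, ContDiff ℝ (⊤ : ℕ∞) (fun q => K q a b))
    (A B : (Fin 3 → ℝ) → Matrix (Fin N) (Fin N) ℝ)
    (hA : A = pdM 2 K) (hB : B = fun q => -(pdM 1 K q)) :
    (∀ q : Fin 3 → ℝ,
      pdM 2 B q + pdM 1 A q = 0 ∧
      (pdM 0 B q - (pd 0 m q / pd 2 m q) • pdM 2 B q)
        + (Real.exp (-φ q) / pd 2 m q) • pdM 2 A q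
        - (pd 2 φ q * (pd 0 m q / pd 2 m q) - pd 0 φ q) • B q
        + (A q * B q - B q * A q) = 0) ↔
    (∀ q : Fin 3 → ℝ,
      Real.exp (-φ q) • pdM 2 (pdM 2 K) q
        + pd 0 m q • pdM 2 (pdM 1 K) q
        - pd 2 m q • pdM 1 (pdM 0 K) q
        + (pd 2 φ q * pd 0 m q - pd 0 φ q * pd 2 m q) • pdM 1 K q
        + pd 2 m q • (pdM 1 K q * pdM 2 K q - pdM 2 K q * pdM 1 K q) = 0) := by
  subst hA hB
  have comm01 : ∀ q, pdM 0 (pdM 1 K) q = pdM 1 (pdM 0 K) q := pdM_comm 0 1 K hK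
  have comm12 : ∀ q, pdM 1 (pdM 2 K) q = pdM 2 (pdM 1 K) q := pdM_comm 1 2 K hK
  have key : ∀ q : Fin 3 → ℝ,
      Real.exp (-φ q) • pdM 2 (pdM 2 K) q
        + pd 0 m q • pdM 2 (pdM 1 K) q
        - pd 2 m q • pdM 1 (pdM 0 K) q
        + (pd 2 φ q * pd 0 m q - pd 0 φ q * pd 2 m q) • pdM 1 K q
        + pd 2 m q • (pdM 1 K q * pdM 2 K q - pdM 2 K q * pdM 1 K q)
      = pd 2 m q •
        ((-(pdM 1 (pdM 0 K) q) - (pd 0 m q / pd 2 m q) • (-(pdM 2 (pdM 1 K) q)))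
          + (Real.exp (-φ q) / pd 2 m q) • pdM 2 (pdM 2 K) q
          - (pd 2 φ q * (pd 0 m q / pd 2 m q) - pd 0 φ q) • (-(pdM 1 K q))
          + (-(pdM 2 K q * pdM 1 K q) - -(pdM 1 K q * pdM 2 K q))) := by
    intro q
    have h0 := hmt q
    match_scalars <;> field_simp <;> ring
  constructor
  · intro h q
    have h2 := (h q).2
    rw [pdM_neg, pdM_neg, comm01, mul_neg, neg_mul] at h2
    rw [key q, h2, smul_zero]
  · intro h q
    refine ⟨?_, ?_⟩
    · rw [pdM_neg, comm12, neg_add_cancel]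
    · rw [pdM_neg, pdM_neg, comm01, mul_neg, neg_mul]
      have hk := key q
      rw [h q] at hk
      exact (smul_eq_zero.mp hk.symm).resolve_left (hmt q)
end
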